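/- For real y, z > 0 with y ≠ z, R_D(0,y,z) = (3/(z(y−z))) [2 R_G(y,z,0) − z R_F(y,z,0)]. -/

import Mathlib

open MeasureTheory Real

noncomputable def RC (x y : ℝ) : ℝ :=
  (1/2) * ∫ t in Set.Ioi (0:ℝ), (Real.sqrt (t + x))⁻¹ * (t + y)⁻¹

noncomputable def RF (x y z : ℝ) : ℝ :=
  (1/2) * ∫ t in Set.Ioi (0:ℝ), (Real.sqrt ((t + x) * (t + y) * (t + z)))⁻¹

noncomputable def RD (x y z : ℝ) : ℝ :=
  (3/2) * ∫ t in Set.Ioi (0:ℝ),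
    (Real.sqrt ((t + x) * (t + y)))⁻¹ * ((t + z) * Real.sqrt (t + z))⁻¹

noncomputable def RJ (x y z p : ℝ) : ℝ :=
  (3/2) * ∫ t in Set.Ioi (0:ℝ),
    (Real.sqrt ((t + x) * (t + y) * (t + z)))⁻¹ * (t + p)⁻¹

noncomputable def RG (x y z : ℝ) : ℝ :=
  (1/4) * ∫ t in Set.Ioi (0:ℝ),
    (Real.sqrt ((t + x) * (t + y) * (t + z)))⁻¹ *
      (x / (t + x) + y / (t + y) + z / (t + z)) * t

open Set Filter Topology

/-!
With one argument equal to `0`, each of the three integrands is bounded on `(0, ∞)` by a multiple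
of `1 / (√t (t + m))`, `m = min y z`, whose primitive is an arctangent; so all integrals converge.
The function `H(t) = -2y √t / (√(t+y) √(t+z))` vanishes at `0` and at `∞`, and its derivative is
the `R_G` integrand minus `z` times the `R_F` integrand minus `z (y - z)` times the `R_D`
integrand. Hence `2 R_G(y,z,0) - z R_F(y,z,0) = z (y - z) R_D(0,y,z) / 3`.
-/

lemma integrableOn_Ioi_inv_sqrt_mul_add {m : ℝ} (hm : 0 < m) :
    IntegrableOn (fun t : ℝ => (√t * (t + m))⁻¹) (Ioi 0) := by
  have hsm : 0 < √m := sqrt_pos.2 hm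
  refine integrableOn_Ioi_deriv_of_nonneg (g := fun t => 2 / √m * arctan (√t / √m))
    (l := 2 / √m * (π / 2)) (by fun_prop : Continuous _).continuousWithinAt
    (fun t (ht : 0 < t) => ?_) (fun t (ht : 0 < t) => by positivity) ?_
  · refine ((((hasDerivAt_sqrt ht.ne').div_const √m).arctan).const_mul (2 / √m)).congr_deriv ?_
    rw [div_pow, sq_sqrt ht.le, sq_sqrt hm.le]
    field_simp
    rw [sq_sqrt hm.le]
    ring
  · exact ((tendsto_arctan_atTop.mono_right nhdsWithin_le_nhds).comp
      (tendsto_sqrt_atTop.atTop_div_const hsm)).const_mul _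

lemma integrableOn_Ioi_of_norm_le_inv_sqrt_mul_add {f : ℝ → ℝ} {m C : ℝ} (hm : 0 < m)
    (hf : AEStronglyMeasurable f (volume.restrict (Ioi 0)))
    (hbound : ∀ t, 0 < t → ‖f t‖ ≤ C * (√t * (t + m))⁻¹) :
    IntegrableOn f (Ioi 0) :=
  ((integrableOn_Ioi_inv_sqrt_mul_add hm).const_mul C).mono' hf <|
    (ae_restrict_mem measurableSet_Ioi).mono hbound

section Integrands

variable {y z t : ℝ}

lemma inv_sqrt_mul_mul_le (hy : 0 < y) (hz : 0 < z) (ht : 0 < t) :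
    (√((t + y) * (t + z) * t))⁻¹ ≤ (√t * (t + min y z))⁻¹ := by
  have hm : 0 < min y z := lt_min hy hz
  refine inv_anti₀ (by positivity) ?_
  calc √t * (t + min y z) = √((t + min y z) * (t + min y z) * t) := by
        rw [sqrt_mul (by positivity), sqrt_mul_self (by positivity), mul_comm]
    _ ≤ √((t + y) * (t + z) * t) := by
        gcongr
        exacts [min_le_left y z, min_le_right y z]

lemma integrableOn_RF_integrand (hy : 0 < y) (hz : 0 < z) :
    IntegrableOn (fun t : ℝ => (√((t + y) * (t + z) * t))⁻¹) (Ioi 0) := by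
  refine integrableOn_Ioi_of_norm_le_inv_sqrt_mul_add (C := 1) (lt_min hy hz)
    (by fun_prop) fun t ht => ?_
  rw [norm_of_nonneg (by positivity), one_mul]
  exact inv_sqrt_mul_mul_le hy hz ht

lemma integrableOn_RG_integrand (hy : 0 < y) (hz : 0 < z) :
    IntegrableOn (fun t : ℝ => (√((t + y) * (t + z) * t))⁻¹ * (y / (t + y) + z / (t + z)) * t)
      (Ioi 0) := by
  refine integrableOn_Ioi_of_norm_le_inv_sqrt_mul_add (C := y + z) (lt_min hy hz)
    (by fun_prop) fun t ht => ?_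
  have hweight : (y / (t + y) + z / (t + z)) * t ≤ y + z := by
    have hy' : y / (t + y) * t ≤ y := by
      rw [div_mul_eq_mul_div, div_le_iff₀ (by positivity)]; nlinarith
    have hz' : z / (t + z) * t ≤ z := by
      rw [div_mul_eq_mul_div, div_le_iff₀ (by positivity)]; nlinarith
    linarith [add_mul (y / (t + y)) (z / (t + z)) t]
  rw [norm_of_nonneg (by positivity), mul_assoc, mul_comm (y + z)]
  exact mul_le_mul (inv_sqrt_mul_mul_le hy hz ht) hweight (by positivity) (by positivity)

lemma integrableOn_RD_integrand (hy : 0 < y) (hz : 0 < z) :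
    IntegrableOn (fun t : ℝ => (√(t * (t + y)))⁻¹ * ((t + z) * √(t + z))⁻¹) (Ioi 0) := by
  refine integrableOn_Ioi_of_norm_le_inv_sqrt_mul_add (C := (√y * √z)⁻¹) hz
    (by fun_prop) fun t (ht : 0 < t) => ?_
  rw [norm_of_nonneg (by positivity), ← mul_inv, ← mul_inv]
  refine inv_anti₀ (by positivity) ?_
  calc √y * √z * (√t * (t + z)) = √t * √y * (t + z) * √z := by ring
    _ ≤ √t * √(t + y) * (t + z) * √(t + z) := by gcongr <;> linarith
    _ = √(t * (t + y)) * ((t + z) * √(t + z)) := by rw [sqrt_mul ht.le]; ring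

end Integrands

section Primitive

variable {y z : ℝ}

lemma hasDerivAt_sqrt_div_sqrt_mul_sqrt (hy : 0 < y) (hz : 0 < z) {t : ℝ} (ht : 0 < t) :
    HasDerivAt (fun s => -2 * y * (√s / (√(s + y) * √(s + z))))
      ((√((t + y) * (t + z) * t))⁻¹ * (y / (t + y) + z / (t + z)) * t
        - z * (√((t + y) * (t + z) * t))⁻¹
        - z * (y - z) * ((√(t * (t + y)))⁻¹ * ((t + z) * √(t + z))⁻¹)) t := by
  have hty : 0 < t + y := by linarith
  have htz : 0 < t + z := by linarith
  have ha0 : 0 < √t := sqrt_pos.2 ht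
  have hb0 : 0 < √(t + y) := sqrt_pos.2 hty
  have hc0 : 0 < √(t + z) := sqrt_pos.2 htz
  have hB := ((hasDerivAt_id t).add_const y).sqrt hty.ne'
  have hC := ((hasDerivAt_id t).add_const z).sqrt htz.ne'
  refine (((hasDerivAt_sqrt ht.ne').div (hB.mul hC) (mul_pos hb0 hc0).ne').const_mul
    (-2 * y)).congr_deriv ?_
  simp only [Pi.mul_apply, id]
  clear hB hC
  rw [sqrt_mul (by positivity), sqrt_mul hty.le, sqrt_mul ht.le]
  have ha : √t * √t = t := mul_self_sqrt ht.le
  have hb : √(t + y) * √(t + y) = t + y := mul_self_sqrt hty.le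
  have hc : √(t + z) * √(t + z) = t + z := mul_self_sqrt htz.le
  -- in `a = √t`, `b = √(t + y)`, `c = √(t + z)` this is an identity of rational functions
  generalize √t = a at *
  generalize √(t + y) = b at *
  generalize √(t + z) = c at *
  subst ha
  obtain rfl : y = b * b - a * a := by linarith
  obtain rfl : z = c * c - a * a := by linarith
  field_simp
  ring

lemma tendsto_sqrt_div_sqrt_mul_sqrt_atTop (hy : 0 ≤ y) (hz : 0 ≤ z) :
    Tendsto (fun s => √s / (√(s + y) * √(s + z))) atTop (𝓝 0) := by
  refine tendsto_of_tendsto_of_tendsto_of_le_of_le' tendsto_const_nhds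
    (tendsto_inv_atTop_zero.comp tendsto_sqrt_atTop) ?_ ?_
  · exact Eventually.of_forall fun s => by positivity
  · filter_upwards [eventually_gt_atTop 0] with s hs
    have hs' : 0 < √s := sqrt_pos.2 hs
    calc √s / (√(s + y) * √(s + z)) ≤ √s / (√s * √s) := by
          gcongr <;> linarith
      _ = (√s)⁻¹ := by field_simp

end Primitive

lemma two_mul_RG_sub_mul_RF (y z : ℝ) (hy : 0 < y) (hz : 0 < z) :
    2 * RG y z 0 - z * RF y z 0 = z * (y - z) / 3 * RD 0 y z := by
  have hcont : ContinuousWithinAt (fun s => -2 * y * (√s / (√(s + y) * √(s + z)))) (Ici 0) 0 :=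
    ContinuousAt.continuousWithinAt (by fun_prop (disch := positivity))
  have hlim := (tendsto_sqrt_div_sqrt_mul_sqrt_atTop hy.le hz.le).const_mul (-2 * y)
  rw [mul_zero] at hlim
  have hG := integrableOn_RG_integrand hy hz
  have hF := (integrableOn_RF_integrand hy hz).const_mul z
  have hD := (integrableOn_RD_integrand hy hz).const_mul (z * (y - z))
  have hFTC := integral_Ioi_of_hasDerivAt_of_tendsto hcont
    (fun t ht => hasDerivAt_sqrt_div_sqrt_mul_sqrt hy hz ht) ((hG.sub hF).sub hD) hlim
  rw [integral_sub (by exact hG.sub hF) hD, integral_sub hG hF, integral_const_mul,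
    integral_const_mul] at hFTC
  simp only [RG, RF, RD, add_zero, zero_div]
  simp only [sqrt_zero, zero_div, mul_zero, sub_zero] at hFTC
  linear_combination (1 / 2) * hFTC

theorem stmt11 (y z : ℝ) (hy : 0 < y) (hz : 0 < z) (hne : y ≠ z) :
    RD 0 y z = (3 / (z * (y - z))) * (2 * RG y z 0 - z * RF y z 0) := by
  have hyz : z * (y - z) ≠ 0 := mul_ne_zero hz.ne' (sub_ne_zero.2 hne)
  rw [two_mul_RG_sub_mul_RF y z hy hz]
  field_simp
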